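/- The functions e³ₓ(τ) = √2/(1 + (1/2)ς⋆τ²), χ₂(τ) = -2ς⋆τ/(1 + (1/2)ς⋆τ²), χ_h(τ) = ς⋆τ/(1 + (1/2)ς⋆τ²), θ₂(τ) = 2ς⋆/(1 + (1/2)ς⋆τ²), θ_h(τ) = -ς⋆/(1 + (1/2)ς⋆τ²) solve the system ∂_τ e³ₓ = (1/3)(χ₂ - χ_h)e³ₓ, ∂_τ χ₂ = (1/6)(χ₂ - 4χ_h)χ₂ - θ₂, ∂_τ χ_h = -(1/6)χ₂² - (1/3)χ_h² - θ_h, ∂_τ θ₂ = (1/6)(χ₂ - 2χ_h)θ₂ - (1/3)χ₂θ_h, ∂_τ θ_h = -(1/6)χ₂θ₂ - (1/3)χ_hθ_h, with initial data e³ₓ(0) = √2, χ₂(0) = χ_h(0) = 0, θ₂(0) = 2ς⋆, θ_h(0) = -ς⋆. -/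

import Mathlib

/-! Every component is a linear polynomial in `τ` over the common denominator
`1 + ς τ² / 2`, which is positive for `ς ≥ 0`; the quotient rule reduces each equation of the
system to a polynomial identity after clearing that denominator. -/

lemma one_add_half_mul_sq_pos {ς : ℝ} (hς : 0 ≤ ς) (τ : ℝ) : 0 < 1 + 1 / 2 * ς * τ ^ 2 := by
  positivity

lemma hasDerivAt_one_add_half_mul_sq (ς τ : ℝ) :
    HasDerivAt (fun t => 1 + 1 / 2 * ς * t ^ 2) (ς * τ) τ :=
  (((hasDerivAt_pow 2 τ).const_mul (1 / 2 * ς)).const_add 1).congr_deriv (by ring)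

lemma HasDerivAt.div_one_add_half_mul_sq {f : ℝ → ℝ} {f' ς τ : ℝ} (hf : HasDerivAt f f' τ)
    (hς : 0 ≤ ς) :
    HasDerivAt (fun t => f t / (1 + 1 / 2 * ς * t ^ 2))
      ((f' * (1 + 1 / 2 * ς * τ ^ 2) - f τ * (ς * τ)) / (1 + 1 / 2 * ς * τ ^ 2) ^ 2) τ :=
  hf.div (hasDerivAt_one_add_half_mul_sq ς τ) (one_add_half_mul_sq_pos hς τ).ne'

/-- The explicit functions `e³ₓ, χ₂, χ_h, θ₂, θ_h` solve the interior subsystem of the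
spherically symmetric conformal evolution equations at the conformal boundary,
with the indicated initial data. -/
theorem stmt_4 (ς : ℝ) (hς : 0 < ς) (e χ₂ χh θ₂ θh : ℝ → ℝ)
    (he : e = fun τ => Real.sqrt 2 / (1 + (1 / 2) * ς * τ ^ 2))
    (hχ₂ : χ₂ = fun τ => -(2 * ς * τ) / (1 + (1 / 2) * ς * τ ^ 2))
    (hχh : χh = fun τ => (ς * τ) / (1 + (1 / 2) * ς * τ ^ 2))
    (hθ₂ : θ₂ = fun τ => (2 * ς) / (1 + (1 / 2) * ς * τ ^ 2))
    (hθh : θh = fun τ => -ς / (1 + (1 / 2) * ς * τ ^ 2)) :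
    (∀ τ : ℝ, 0 ≤ τ → HasDerivAt e ((1 / 3) * (χ₂ τ - χh τ) * e τ) τ) ∧
    (∀ τ : ℝ, 0 ≤ τ → HasDerivAt χ₂ ((1 / 6) * (χ₂ τ - 4 * χh τ) * χ₂ τ - θ₂ τ) τ) ∧
    (∀ τ : ℝ, 0 ≤ τ →
      HasDerivAt χh (-(1 / 6) * (χ₂ τ) ^ 2 - (1 / 3) * (χh τ) ^ 2 - θh τ) τ) ∧
    (∀ τ : ℝ, 0 ≤ τ →
      HasDerivAt θ₂ ((1 / 6) * (χ₂ τ - 2 * χh τ) * θ₂ τ - (1 / 3) * χ₂ τ * θh τ) τ) ∧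
    (∀ τ : ℝ, 0 ≤ τ →
      HasDerivAt θh (-(1 / 6) * χ₂ τ * θ₂ τ - (1 / 3) * χh τ * θh τ) τ) ∧
    e 0 = Real.sqrt 2 ∧ χ₂ 0 = 0 ∧ χh 0 = 0 ∧ θ₂ 0 = 2 * ς ∧ θh 0 = -ς := by
  subst he hχ₂ hχh hθ₂ hθh
  have hD τ := (one_add_half_mul_sq_pos hς.le τ).ne'
  refine ⟨fun τ _ => ?_, fun τ _ => ?_, fun τ _ => ?_, fun τ _ => ?_, fun τ _ => ?_,
    by norm_num, by norm_num, by norm_num, by norm_num, by norm_num⟩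
  · refine ((hasDerivAt_const τ _).div_one_add_half_mul_sq hς.le).congr_deriv ?_
    field_simp [hD τ]; ring
  · refine ((hasDerivAt_const_mul (2 * ς)).fun_neg.div_one_add_half_mul_sq hς.le).congr_deriv ?_
    field_simp [hD τ]; ring
  · refine ((hasDerivAt_const_mul ς).div_one_add_half_mul_sq hς.le).congr_deriv ?_
    field_simp [hD τ]; ring
  · refine ((hasDerivAt_const τ _).div_one_add_half_mul_sq hς.le).congr_deriv ?_
    field_simp [hD τ]; ring
  · refine ((hasDerivAt_const τ _).div_one_add_half_mul_sq hς.le).congr_deriv ?_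
    field_simp [hD τ]; ring
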